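/- arXiv:2511.12806 — 6 statements merged into one kernel-verified Lean document; each statement's English description precedes it below -/
import Mathlib

section
/- Let M be a monomial in variables x_1,...,x_n such that the exponent of each variable is at most b, and suppose deg(M) = a·b for positive integers a, b. Then M can be written as a product of b squarefree monomials, each of degree a. -/
theorem aux_factor (n a : ℕ) : ∀ b (p : Fin n → ℕ), (∀ i, p i ≤ b) → ∑ i, p i = a * b →
    ∃ S : Fin b → Finset (Fin n),
      (∀ j, (S j).card = a) ∧
      (∀ i, (Finset.univ.filter (fun j => i ∈ S j)).card = p i) := by
  intro b
  induction b with
  | zero =>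
    intro p hpb _
    exact ⟨fun j => ∅, fun j => j.elim0, fun i => by
      simp [Nat.le_zero.mp (hpb i)]⟩
  | succ b ih =>
    intro p hpb hsum
    set full : Finset (Fin n) := Finset.univ.filter (fun i => p i = b + 1) with hfull
    set supp : Finset (Fin n) := Finset.univ.filter (fun i => 0 < p i) with hsupp
    have hfs : full ⊆ supp := by
      intro i hi
      simp only [hfull, hsupp, Finset.mem_filter, Finset.mem_univ, true_and] at *
      omega
    have hcard_full : full.card ≤ a := by
      have h1 : full.card * (b + 1) ≤ ∑ i, p i := by
        rw [← Finset.sum_const_nat (m := b + 1) (fun i hi => by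
          simp only [hfull, Finset.mem_filter] at hi; exact hi.2)]
        exact Finset.sum_le_sum_of_subset (Finset.subset_univ _)
      rw [hsum] at h1
      exact Nat.le_of_mul_le_mul_right (by linarith [Nat.mul_comm a (b+1)]) (Nat.succ_pos b)
    have hcard_supp : a ≤ supp.card := by
      have h1 : ∑ i, p i ≤ supp.card * (b + 1) := by
        have : ∑ i, p i = ∑ i ∈ supp, p i := by
          rw [eq_comm]
          apply Finset.sum_subset (Finset.subset_univ _)
          intro i _ hi
          simp only [hsupp, Finset.mem_filter, Finset.mem_univ, true_and] at hi
          omega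
        rw [this]
        calc ∑ i ∈ supp, p i ≤ ∑ i ∈ supp, (b+1) := Finset.sum_le_sum (fun i _ => hpb i)
          _ = supp.card * (b+1) := by rw [Finset.sum_const, smul_eq_mul]
      rw [hsum] at h1
      exact Nat.le_of_mul_le_mul_right (by linarith [Nat.mul_comm a (b+1)]) (Nat.succ_pos b)
    obtain ⟨T, hTfull, hTsupp, hTcard⟩ :=
      Finset.exists_subsuperset_card_eq hfs hcard_full hcard_supp
    set p' : Fin n → ℕ := fun i => p i - (if i ∈ T then 1 else 0) with hp'
    have hite_le : ∀ i, (if i ∈ T then 1 else 0) ≤ p i := by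
      intro i
      split
      · next h =>
        have := hTsupp h
        simp only [hsupp, Finset.mem_filter, Finset.mem_univ, true_and] at this
        omega
      · omega
    have hp'b : ∀ i, p' i ≤ b := by
      intro i
      by_cases h : p i = b + 1
      · have hiT : i ∈ T := hTfull (by simp [hfull, h])
        simp [hp', hiT, h]
      · have := hpb i
        simp only [hp']
        omega
    have hp'sum : ∑ i, p' i = a * b := by
      have h1 : ∑ i, p' i + T.card = ∑ i, p i := by
        have : T.card = ∑ i, (if i ∈ T then 1 else 0) := by
          rw [Finset.sum_ite_mem, Finset.univ_inter, Finset.card_eq_sum_ones]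
        rw [this, ← Finset.sum_add_distrib]
        apply Finset.sum_congr rfl
        intro i _
        have := hite_le i
        simp only [hp']
        omega
      rw [hsum, hTcard] at h1
      have : a * (b + 1) = a * b + a := by ring
      omega
    obtain ⟨S', hS'card, hS'count⟩ := ih p' hp'b hp'sum
    refine ⟨Fin.cases T S', ?_, ?_⟩
    · intro j
      induction j using Fin.cases with
      | zero => simpa using hTcard
      | succ j => simpa using hS'card j
    · intro i
      rw [Finset.card_filter, Fin.sum_univ_succ]
      simp only [Fin.cases_zero, Fin.cases_succ]
      erw [← Finset.card_filter]
      rw [hS'count i]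
      have := hite_le i
      simp only [hp']
      by_cases hiT : i ∈ T <;> simp only [hiT, ↓reduceIte] at this ⊢ <;> omega

/-- A monomial with exponent vector `p` (each exponent at most `b`) of total degree `a*b`
can be factored into `b` squarefree monomials each of degree `a`: there are `b` subsets
of the variables, each of size `a`, such that each variable `i` occurs in exactly `p i`
of them. -/
theorem monomial_factorization_into_squarefree
    (n a b : ℕ) (ha : 0 < a) (hb : 0 < b) (p : Fin n → ℕ)
    (hpb : ∀ i, p i ≤ b) (hsum : ∑ i, p i = a * b) :
    ∃ S : Fin b → Finset (Fin n),
      (∀ j, (S j).card = a) ∧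
      (∀ i, (Finset.univ.filter (fun j => i ∈ S j)).card = p i) :=
  aux_factor n a b p hpb hsum
end

section
/- Let I be the ideal of k[x_1,...,x_n] defined as the intersection of all prime ideals (x_i : i ∈ S) over c-element subsets S of {1,...,n} (the C-matroidal ideal of the uniform matroid U_{c,n}). Then for every m ≥ 1, the squarefree monomials in the symbolic power I^(m) = ⋂_S (x_i : i ∈ S)^m are exactly the squarefree monomials of degree at least n + m − c (when m ≤ c); in particular they correspond to the (n+m−c−1)-faces of the full simplex on n vertices. -/
open MvPolynomial

-- Auxiliary: product of elements of an ideal lies in the power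
lemma prod_mem_pow_card {R : Type*} [CommRing R] {α : Type*} [DecidableEq α]
    (I : Ideal R) (F : Finset α) (f : α → R) (hf : ∀ i ∈ F, f i ∈ I) :
    ∏ i ∈ F, f i ∈ I ^ F.card := by
  classical
  induction F using Finset.induction_on with
  | empty => simp [Ideal.one_eq_top]
  | insert _ _ hx ih =>
    rename_i a s
    rw [Finset.prod_insert hx, Finset.card_insert_of_notMem hx, pow_succ']
    exact Ideal.mul_mem_mul (hf a (Finset.mem_insert_self a s))
      (ih fun i hi => hf i (Finset.mem_insert_of_mem hi))

lemma key_mem_iff (k : Type*) [Field k] (n m : ℕ) (T S : Finset (Fin n)) :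
    ((∏ i ∈ T, X i : MvPolynomial (Fin n) k) ∈
        (Ideal.span ((fun i => (X i : MvPolynomial (Fin n) k)) '' (S : Set (Fin n)))) ^ m)
      ↔ m ≤ (T ∩ S).card := by
  classical
  constructor
  · intro h
    -- map to Polynomial k
    set φ : MvPolynomial (Fin n) k →+* Polynomial k :=
      (aeval (fun i => if i ∈ S then (Polynomial.X : Polynomial k) else 1)).toRingHom with hφ
    have hmap : Ideal.map φ ((Ideal.span ((fun i => (X i : MvPolynomial (Fin n) k)) ''
        (S : Set (Fin n)))) ^ m) ≤ Ideal.span {(Polynomial.X : Polynomial k) ^ m} := by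
      rw [Ideal.map_pow, Ideal.map_span, ← Ideal.span_singleton_pow]
      apply Ideal.pow_right_mono
      rw [Ideal.span_le]
      rintro _ ⟨_, ⟨i, hi, rfl⟩, rfl⟩
      simp only [hφ, AlgHom.toRingHom_eq_coe, RingHom.coe_coe, aeval_X]
      rw [if_pos (Finset.mem_coe.mp hi)]
      exact Ideal.subset_span rfl
    have hφP : φ (∏ i ∈ T, X i) = (Polynomial.X : Polynomial k) ^ (T ∩ S).card := by
      simp only [hφ, AlgHom.toRingHom_eq_coe, RingHom.coe_coe, map_prod, aeval_X]
      rw [Finset.prod_ite_mem, Finset.prod_const]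
    have := hmap (Ideal.mem_map_of_mem φ h)
    rw [hφP, Ideal.mem_span_singleton] at this
    exact (pow_dvd_pow_iff Polynomial.X_ne_zero Polynomial.not_isUnit_X).mp this
  · intro h
    obtain ⟨T', hT'sub, hT'card⟩ := Finset.exists_subset_card_eq h
    have hT'T : T' ⊆ T := hT'sub.trans (Finset.inter_subset_left)
    rw [← Finset.prod_sdiff hT'T]
    have hmem : ∏ i ∈ T', (X i : MvPolynomial (Fin n) k) ∈
        (Ideal.span ((fun i => (X i : MvPolynomial (Fin n) k)) '' (S : Set (Fin n)))) ^ m := by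
      rw [← hT'card]
      exact prod_mem_pow_card _ _ _ fun i hi =>
        Ideal.subset_span ⟨i, Finset.mem_inter.mp (hT'sub hi) |>.2, rfl⟩
    exact Ideal.mul_mem_left _ _ hmem

/-- For the uniform C-matroidal ideal `I = ⋂_{|S| = c} (x_i : i ∈ S)` and `1 ≤ m ≤ c ≤ n`,
a squarefree monomial `∏_{i ∈ T} x_i` lies in the symbolic power `I^(m) = ⋂_S p_S^m`
if and only if its degree `|T|` is at least `n + m - c`. -/
theorem squarefree_in_symbolic_power_uniform_iff
    (k : Type*) [Field k] (n c m : ℕ) (hm : 1 ≤ m) (hmc : m ≤ c) (hcn : c ≤ n) :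
    ∀ T : Finset (Fin n),
      ((∏ i ∈ T, X i : MvPolynomial (Fin n) k) ∈
          ⨅ S ∈ {S : Finset (Fin n) | S.card = c},
            (Ideal.span ((fun i => (X i : MvPolynomial (Fin n) k)) '' (S : Set (Fin n)))) ^ m)
        ↔ n + m - c ≤ T.card := by
  classical
  intro T
  rw [Ideal.mem_iInf]
  simp only [Ideal.mem_iInf, Set.mem_setOf_eq, key_mem_iff]
  constructor
  · intro h
    -- first: n - T.card < c
    by_contra hlt
    push_neg at hlt
    rcases le_or_gt c Tᶜ.card with hc | hc
    · obtain ⟨S, hSsub, hScard⟩ := Finset.exists_subset_card_eq hc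
      have := h S hScard
      have : T ∩ S = ∅ := by
        rw [Finset.eq_empty_iff_forall_notMem]
        intro x hx
        rw [Finset.mem_inter] at hx
        exact (Finset.mem_compl.mp (hSsub hx.2)) hx.1
      have h2 := h S hScard
      rw [this] at h2
      simp at h2
      omega
    · obtain ⟨S, hSsub, hScard⟩ := Finset.exists_superset_card_eq (le_of_lt hc)
        (by simpa using hcn)
      have hunion : T ∪ S = Finset.univ := by
        rw [Finset.eq_univ_iff_forall]
        intro x
        by_cases hx : x ∈ T
        · exact Finset.mem_union_left _ hx
        · exact Finset.mem_union_right _ (hSsub (Finset.mem_compl.mpr hx))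
      have hcc := Finset.card_union_add_card_inter T S
      rw [hunion, Finset.card_univ, Fintype.card_fin] at hcc
      have := h S hScard
      omega
  · intro hT S hS
    have h1 := Finset.card_union_add_card_inter T S
    have h2 : (T ∪ S).card ≤ n := by
      simpa using Finset.card_le_univ (T ∪ S)
    omega
end

section
/- Let I be the uniform C-matroidal ideal of U_{c,n} in k[x_1,...,x_n], with 1 ≤ c ≤ n. Then the resurgence number ρ(I) = sup{ m/r : I^(m) ⊄ I^r, m,r ≥ 1 } equals c(n−c+1)/n. -/
open MvPolynomial

namespace UniformResurgenceAux

open Finset Pointwise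

variable {n : ℕ}

/-- iterated sumset -/
def iterSum {M : Type*} [AddCommMonoid M] (A : Set M) : ℕ → Set M
  | 0 => {0}
  | (r+1) => iterSum A r + A

lemma add_mem_iterSum {M : Type*} [AddCommMonoid M] {A : Set M} {p q : ℕ} {x y : M}
    (hx : x ∈ iterSum A p) (hy : y ∈ iterSum A q) : x + y ∈ iterSum A (p + q) := by
  induction q generalizing y with
  | zero => simp only [iterSum, Set.mem_singleton_iff] at hy; simpa [hy]
  | succ q ih =>
    obtain ⟨y', hy', a, ha, rfl⟩ := hy
    have : x + (y' + a) = x + y' + a := (add_assoc x y' a).symm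
    rw [this]
    exact Set.add_mem_add (ih hy') ha

lemma mem_iterSum_one {M : Type*} [AddCommMonoid M] {A : Set M} {x : M} (hx : x ∈ A) :
    x ∈ iterSum A 1 :=
  ⟨0, rfl, x, hx, zero_add x⟩

/-- existence of a "top d" subset -/
lemma exists_topset {α : Type*} [LinearOrder α] (f : Fin n → α) :
    ∀ d, d ≤ n → ∃ T : Finset (Fin n), T.card = d ∧ ∀ i ∉ T, ∀ j ∈ T, f i ≤ f j := by
  intro d
  induction d with
  | zero => exact fun _ => ⟨∅, by simp⟩
  | succ d ih =>
    intro hd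
    obtain ⟨T, hTc, hT⟩ := ih (Nat.le_of_succ_le hd)
    have hne : (Tᶜ : Finset (Fin n)).Nonempty := by
      rw [← Finset.card_pos, Finset.card_compl, hTc, Fintype.card_fin]
      omega
    obtain ⟨b, hb, hbmax⟩ := Finset.exists_max_image _ f hne
    have hbT : b ∉ T := Finset.mem_compl.mp hb
    refine ⟨insert b T, by rw [Finset.card_insert_of_notMem hbT, hTc], ?_⟩
    intro i hi j hj
    have hiT : i ∉ T := fun h => hi (Finset.mem_insert_of_mem h)
    rcases Finset.mem_insert.mp hj with rfl | hjT
    · exact hbmax i (Finset.mem_compl.mpr hiT)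
    · exact hT i hiT j hjT

noncomputable def indic (T : Finset (Fin n)) : Fin n →₀ ℕ := ∑ i ∈ T, Finsupp.single i 1

lemma indic_apply (T : Finset (Fin n)) (i : Fin n) :
    indic T i = if i ∈ T then 1 else 0 := by
  rw [indic, Finset.sum_apply']
  simp_rw [Finsupp.single_apply]
  exact Finset.sum_ite_eq' T i (fun _ => 1)

def Gset (d : ℕ) : Set (Fin n →₀ ℕ) := {s | ∃ T : Finset (Fin n), T.card = d ∧ s = indic T}

lemma iterSum_Gset_total {d r : ℕ} {s : Fin n →₀ ℕ} (hs : s ∈ iterSum (Gset d) r) :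
    ∑ i, s i = r * d := by
  induction r generalizing s with
  | zero => simp only [iterSum, Set.mem_singleton_iff] at hs; simp [hs]
  | succ r ih =>
    obtain ⟨y, hy, g, ⟨T, hT, rfl⟩, rfl⟩ := hs
    have : ∑ i, (y + indic T) i = (∑ i, y i) + ∑ i, indic T i := by
      simp [Finsupp.add_apply, Finset.sum_add_distrib]
    rw [this, ih hy]
    simp only [indic_apply]
    rw [Finset.sum_ite_mem, Finset.univ_inter, Finset.sum_const, smul_eq_mul, mul_one, hT]
    ring

/-- greedy decomposition of an exponent vector into `r` squarefree degree-`d` pieces -/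
lemma greedy {d : ℕ} (hd : d ≤ n) :
    ∀ (r : ℕ) (a : Fin n → ℕ), r * d ≤ ∑ i, min (a i) r →
      ∃ s ∈ iterSum (Gset d) r, ∀ i, s i ≤ a i := by
  intro r
  induction r with
  | zero => exact fun a _ => ⟨0, rfl, fun i => Nat.zero_le _⟩
  | succ r ih =>
    intro a ha
    obtain ⟨T, hTc, hT⟩ := exists_topset a d hd
    -- every element of T has a positive value
    have hT1 : ∀ j ∈ T, 1 ≤ a j := by
      by_contra hcon
      push_neg at hcon
      obtain ⟨j, hj, hj0⟩ := hcon
      have hj0 : a j = 0 := by omega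
      have hz : ∀ i ∈ (Finset.univ : Finset (Fin n)), i ∉ T.erase j → min (a i) (r+1) = 0 := by
        intro i _ hi
        by_cases hij : i = j
        · subst hij; simp [hj0]
        · have hiT : i ∉ T := fun hmem => hi (Finset.mem_erase.mpr ⟨hij, hmem⟩)
          have := hT i hiT j hj
          omega
      have hsum : ∑ i, min (a i) (r+1) = ∑ i ∈ T.erase j, min (a i) (r+1) :=
        (Finset.sum_subset (Finset.subset_univ _) hz).symm
      have hle : ∑ i ∈ T.erase j, min (a i) (r+1) ≤ (T.erase j).card • (r+1) :=
        Finset.sum_le_card_nsmul _ _ _ (fun x _ => Nat.min_le_right _ _)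
      have hcard : (T.erase j).card = d - 1 := by rw [Finset.card_erase_of_mem hj, hTc]
      obtain ⟨d', rfl⟩ : ∃ d', d = d' + 1 :=
        ⟨d - 1, by have : 1 ≤ d := hTc ▸ Finset.card_pos.mpr ⟨j, hj⟩; omega⟩
      rw [hsum] at ha
      rw [hcard] at hle
      simp only [smul_eq_mul, Nat.add_sub_cancel] at hle
      nlinarith [ha, hle]
    -- the decremented vector
    set a' : Fin n → ℕ := fun i => if i ∈ T then a i - 1 else a i with ha'
    have key : r * d ≤ ∑ i, min (a' i) r := by
      by_cases hcase : ∀ j ∈ T, r + 1 ≤ a j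
      · -- all entries of T are large
        have h1 : ∑ i ∈ T, min (a' i) r ≤ ∑ i, min (a' i) r :=
          Finset.sum_le_sum_of_subset (Finset.subset_univ T)
        have h2 : ∑ i ∈ T, min (a' i) r = ∑ i ∈ T, r := by
          apply Finset.sum_congr rfl
          intro i hi
          have := hcase i hi
          simp only [ha', if_pos hi]
          omega
        rw [h2, Finset.sum_const, smul_eq_mul, hTc, mul_comm] at h1
        exact h1
      · -- some entry of T is at most r
        push_neg at hcase
        obtain ⟨j0, hj0T, hj0⟩ := hcase
        have pointwise : ∀ i, min (a i) (r+1) ≤ min (a' i) r + (if i ∈ T then 1 else 0) := by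
          intro i
          by_cases hi : i ∈ T
          · have := hT1 i hi
            simp only [ha', if_pos hi]
            omega
          · have h1 : a i ≤ a j0 := hT i hi j0 hj0T
            simp only [ha', if_neg hi]
            omega
        have hsum : ∑ i, min (a i) (r+1) ≤
            (∑ i, min (a' i) r) + ∑ i, (if i ∈ T then 1 else 0) := by
          rw [← Finset.sum_add_distrib]
          exact Finset.sum_le_sum (fun i _ => pointwise i)
        have hind : ∑ i, (if i ∈ T then 1 else 0) = d := by
          rw [Finset.sum_ite_mem, Finset.univ_inter, Finset.sum_const, smul_eq_mul, mul_one, hTc]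
        rw [hind] at hsum
        have := le_trans ha hsum
        have hexp : (r+1) * d = r * d + d := by ring
        omega
    obtain ⟨s, hs, hsle⟩ := ih a' key
    refine ⟨s + indic T, add_mem_iterSum hs (mem_iterSum_one ⟨T, hTc, rfl⟩), ?_⟩
    intro i
    rw [Finsupp.add_apply, indic_apply]
    by_cases hi : i ∈ T
    · have h1 := hsle i
      have h2 := hT1 i hi
      simp only [ha', if_pos hi] at h1
      simp only [if_pos hi]
      omega
    · have h1 := hsle i
      simp only [ha', if_neg hi] at h1
      simp only [if_neg hi]
      omega

lemma reduction {c d m r : ℕ} (hc : 1 ≤ c) (hcn : c ≤ n) (hd : c + d = n + 1)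
    (a : Fin n → ℕ) (h : ∀ S : Finset (Fin n), S.card = c → m ≤ ∑ i ∈ S, a i)
    (hmr : r * c * d < n * m) : r * d ≤ ∑ i, min (a i) r := by
  obtain ⟨S, hSc, hS⟩ := exists_topset (fun i => OrderDual.toDual (a i)) c hcn
  have hS' : ∀ i ∉ S, ∀ j ∈ S, a j ≤ a i := fun i hi j hj => hS i hi j hj
  have hSne : S.Nonempty := Finset.card_pos.mp (by omega)
  obtain ⟨j0, hj0S, hj0⟩ := Finset.exists_max_image S a hSne
  obtain ⟨d', rfl⟩ : ∃ d', d = d' + 1 := ⟨d - 1, by omega⟩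
  have hd' : n = c + d' := by omega
  by_cases hcase : r ≤ a j0
  · -- the top d entries are all ≥ r
    have hj0c : j0 ∉ Sᶜ := by simp [hj0S]
    have hUcard : (insert j0 Sᶜ).card = d' + 1 := by
      rw [Finset.card_insert_of_notMem hj0c, Finset.card_compl, Fintype.card_fin, hSc]
      omega
    have hmem : ∀ i ∈ insert j0 Sᶜ, min (a i) r = r := by
      intro i hi
      rcases Finset.mem_insert.mp hi with rfl | hi
      · omega
      · have := hS' i (Finset.mem_compl.mp hi) j0 hj0S
        omega
    calc r * (d' + 1) = ∑ i ∈ insert j0 Sᶜ, min (a i) r := by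
          rw [Finset.sum_congr rfl hmem, Finset.sum_const, smul_eq_mul, hUcard, mul_comm]
      _ ≤ ∑ i, min (a i) r :=
          Finset.sum_le_sum_of_subset (Finset.subset_univ _)
  · -- all of S is < r
    push_neg at hcase
    have h1 : ∑ i ∈ S, a i ≤ ∑ i ∈ S, min (a i) r := by
      apply Finset.sum_le_sum
      intro i hi
      have := hj0 i hi
      omega
    have h2 : Sᶜ.card • a j0 ≤ ∑ i ∈ Sᶜ, min (a i) r := by
      apply Finset.card_nsmul_le_sum
      intro i hi
      have := hS' i (Finset.mem_compl.mp hi) j0 hj0S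
      omega
    have h3 : ∑ i ∈ S, min (a i) r + ∑ i ∈ Sᶜ, min (a i) r = ∑ i, min (a i) r :=
      Finset.sum_add_sum_compl S _
    have hm : m ≤ ∑ i ∈ S, a i := h S hSc
    have hmt : m ≤ c * a j0 := by
      calc m ≤ ∑ i ∈ S, a i := hm
        _ ≤ ∑ i ∈ S, a j0 := Finset.sum_le_sum (fun i hi => hj0 i hi)
        _ = c * a j0 := by rw [Finset.sum_const, smul_eq_mul, hSc]
    have hcc : Sᶜ.card = d' := by
      rw [Finset.card_compl, Fintype.card_fin, hSc]; omega
    rw [hcc, smul_eq_mul] at h2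
    have hkey : r * (d' + 1) ≤ m + d' * a j0 := by
      have hlt : c * (r * (d' + 1)) < c * (m + d' * a j0) := by
        calc c * (r * (d' + 1)) = r * c * (d' + 1) := by ring
          _ < n * m := hmr
          _ = c * m + d' * m := by rw [hd']; ring
          _ ≤ c * m + d' * (c * a j0) := by
              have := Nat.mul_le_mul_left d' hmt
              omega
          _ = c * (m + d' * a j0) := by ring
      exact le_of_lt (Nat.lt_of_mul_lt_mul_left hlt)
    omega

section IdealSide

variable (k : Type*) [Field k]

noncomputable def MI (A : Set (Fin n →₀ ℕ)) : Ideal (MvPolynomial (Fin n) k) :=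
  Ideal.span ((fun s => monomial s (1 : k)) '' A)

lemma MI_mul (A B : Set (Fin n →₀ ℕ)) : MI k A * MI k B = MI k (A + B) := by
  rw [MI, MI, MI, Ideal.span_mul_span']
  congr 1
  rw [← Set.image2_mul, Set.image2_image_left, Set.image2_image_right, ← Set.image2_add,
    Set.image_image2]
  ext p
  simp only [Set.mem_image2, monomial_mul, one_mul]

lemma MI_pow (A : Set (Fin n →₀ ℕ)) (r : ℕ) : MI k A ^ r = MI k (iterSum A r) := by
  induction r with
  | zero =>
    rw [pow_zero, iterSum, MI, Set.image_singleton]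
    rw [Ideal.one_eq_top, eq_comm, Ideal.eq_top_iff_one]
    exact Ideal.subset_span (by simp)
  | succ r ih => rw [pow_succ, ih, MI_mul, iterSum]

lemma mem_MI {f : MvPolynomial (Fin n) k} {A : Set (Fin n →₀ ℕ)} :
    f ∈ MI k A ↔ ∀ a ∈ f.support, ∃ s ∈ A, s ≤ a :=
  mem_ideal_span_monomial_image

lemma monomial_mem_MI {a : Fin n →₀ ℕ} {A : Set (Fin n →₀ ℕ)} :
    monomial a (1 : k) ∈ MI k A ↔ ∃ s ∈ A, s ≤ a := by
  classical
  rw [mem_MI, support_monomial]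
  simp

lemma span_X_eq (S : Finset (Fin n)) :
    Ideal.span ((fun i => (X i : MvPolynomial (Fin n) k)) '' (S : Set (Fin n))) =
      MI k ((fun i => Finsupp.single i 1) '' (S : Set (Fin n))) := by
  rw [MI, Set.image_image]
  rfl

lemma prod_X_eq (T : Finset (Fin n)) :
    (∏ i ∈ T, (X i : MvPolynomial (Fin n) k)) = monomial (indic T) 1 := by
  classical
  induction T using Finset.induction with
  | empty => simp [indic, monomial_zero']
  | insert _ _ hx ih =>
    rename_i a s
    rw [Finset.prod_insert hx, ih,
      show indic (insert a s) = Finsupp.single a 1 + indic s by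
        rw [indic, indic, Finset.sum_insert hx],
      show (X a : MvPolynomial (Fin n) k) = monomial (Finsupp.single a 1) 1 from rfl,
      monomial_mul, one_mul]

lemma span_gens_eq (d : ℕ) :
    Ideal.span {f : MvPolynomial (Fin n) k |
        ∃ T : Finset (Fin n), T.card = d ∧ f = ∏ i ∈ T, X i} = MI k (Gset d) := by
  rw [MI]
  congr 1
  ext f
  constructor
  · rintro ⟨T, hT, rfl⟩
    exact ⟨indic T, ⟨T, hT, rfl⟩, (prod_X_eq k T).symm⟩
  · rintro ⟨s, ⟨T, hT, rfl⟩, rfl⟩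
    exact ⟨T, hT, (prod_X_eq k T).symm⟩

end IdealSide

lemma sum_single_apply (S : Finset (Fin n)) (t : ℕ) (i : Fin n) :
    (∑ j ∈ S, Finsupp.single j t) i = if i ∈ S then t else 0 := by
  rw [Finset.sum_apply']
  simp_rw [Finsupp.single_apply]
  exact Finset.sum_ite_eq' S i (fun _ => t)

lemma sum_eq_of_mem_iterSum_singles {S : Finset (Fin n)} {m : ℕ} {s : Fin n →₀ ℕ}
    (hs : s ∈ iterSum ((fun i => Finsupp.single i 1) '' (S : Set (Fin n))) m) :
    ∑ i ∈ S, s i = m := by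
  induction m generalizing s with
  | zero => simp only [iterSum, Set.mem_singleton_iff] at hs; simp [hs]
  | succ m ih =>
    obtain ⟨y, hy, g, ⟨j, hj, rfl⟩, rfl⟩ := hs
    have hj' : j ∈ S := hj
    have : ∑ i ∈ S, (y + Finsupp.single j 1 : Fin n →₀ ℕ) i = (∑ i ∈ S, y i) + ∑ i ∈ S,
        (Finsupp.single j 1 : Fin n →₀ ℕ) i := by
      simp [Finsupp.add_apply, Finset.sum_add_distrib]
    rw [this, ih hy]
    simp_rw [Finsupp.single_apply]
    rw [Finset.sum_ite_eq S j (fun _ => 1), if_pos hj']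

lemma single_mem_iterSum_singles {S : Finset (Fin n)} {i : Fin n} (hi : i ∈ S) (t : ℕ) :
    Finsupp.single i t ∈ iterSum ((fun i => Finsupp.single i 1) '' (S : Set (Fin n))) t := by
  induction t with
  | zero => simp [iterSum, Finsupp.single_zero]
  | succ t ih =>
    have : Finsupp.single i (t + 1) = Finsupp.single i t + Finsupp.single i 1 :=
      Finsupp.single_add i t 1
    rw [this]
    exact Set.add_mem_add ih ⟨i, hi, rfl⟩

lemma sum_single_mem_iterSum {S : Finset (Fin n)} (t : ℕ) :
    (∑ j ∈ S, Finsupp.single j t) ∈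
      iterSum ((fun i => Finsupp.single i 1) '' (S : Set (Fin n))) (S.card * t) := by
  classical
  have main : ∀ U : Finset (Fin n), U ⊆ S → (∑ j ∈ U, Finsupp.single j t) ∈
      iterSum ((fun i => Finsupp.single i 1) '' (S : Set (Fin n))) (U.card * t) := by
    intro U
    induction U using Finset.induction with
    | empty => intro _; simp [iterSum]
    | insert _ _ hx ihU =>
      rename_i a U
      intro hsub
      have haS : a ∈ S := hsub (Finset.mem_insert_self a U)
      have hUS : U ⊆ S := fun x hx' => hsub (Finset.mem_insert_of_mem hx')
      rw [Finset.sum_insert hx, Finset.card_insert_of_notMem hx,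
        show (U.card + 1) * t = t + U.card * t by ring]
      exact add_mem_iterSum (single_mem_iterSum_singles haS t) (ihU hUS)
  exact main S (Finset.Subset.refl S)

section Main

variable (k : Type*) [Field k]

lemma containment {n c : ℕ} (hc : 1 ≤ c) (hcn : c ≤ n) (m r : ℕ)
    (h : r * c * (n - c + 1) < n * m) :
    (⨅ S ∈ {S : Finset (Fin n) | S.card = c},
        (Ideal.span ((fun i => (X i : MvPolynomial (Fin n) k)) '' (S : Set (Fin n)))) ^ m) ≤
      (Ideal.span {f : MvPolynomial (Fin n) k |
        ∃ T : Finset (Fin n), T.card = n - c + 1 ∧ f = ∏ i ∈ T, X i}) ^ r := by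
  set d := n - c + 1 with hdd
  intro f hf
  rw [span_gens_eq, MI_pow, mem_MI]
  intro a ha
  have hcond : ∀ S : Finset (Fin n), S.card = c → m ≤ ∑ i ∈ S, a i := by
    intro S hSc
    have hfS : f ∈ (Ideal.span ((fun i => (X i : MvPolynomial (Fin n) k)) ''
        (S : Set (Fin n)))) ^ m := by
      have h1 := Ideal.mem_iInf.mp hf S
      exact Ideal.mem_iInf.mp h1 hSc
    rw [span_X_eq, MI_pow, mem_MI] at hfS
    obtain ⟨s, hsmem, hsle⟩ := hfS a ha
    calc m = ∑ i ∈ S, s i := (sum_eq_of_mem_iterSum_singles hsmem).symm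
      _ ≤ ∑ i ∈ S, a i := Finset.sum_le_sum fun i _ => (Finsupp.le_def.mp hsle) i
  have hred : r * d ≤ ∑ i, min (a i) r :=
    reduction hc hcn (by omega) (fun i => a i) hcond h
  obtain ⟨s, hs, hsle⟩ := greedy (d := d) (by omega) r (fun i => a i) hred
  exact ⟨s, hs, Finsupp.le_def.mpr hsle⟩

lemma noncontainment {n c : ℕ} (hc : 1 ≤ c) (hcn : c ≤ n) (t r : ℕ)
    (h : n * t < r * (n - c + 1)) :
    ¬ ((⨅ S ∈ {S : Finset (Fin n) | S.card = c},
        (Ideal.span ((fun i => (X i : MvPolynomial (Fin n) k)) '' (S : Set (Fin n)))) ^ (c * t)) ≤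
      (Ideal.span {f : MvPolynomial (Fin n) k |
        ∃ T : Finset (Fin n), T.card = n - c + 1 ∧ f = ∏ i ∈ T, X i}) ^ r) := by
  set d := n - c + 1 with hdd
  intro hle
  set a : Fin n →₀ ℕ := ∑ j ∈ Finset.univ, Finsupp.single j t with haa
  have hmem : monomial a (1 : k) ∈ ⨅ S ∈ {S : Finset (Fin n) | S.card = c},
      (Ideal.span ((fun i => (X i : MvPolynomial (Fin n) k)) '' (S : Set (Fin n)))) ^ (c * t) := by
    rw [Ideal.mem_iInf]
    intro S
    rw [Ideal.mem_iInf]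
    intro hSc
    rw [span_X_eq, MI_pow, monomial_mem_MI]
    refine ⟨∑ j ∈ S, Finsupp.single j t, ?_, ?_⟩
    · have := sum_single_mem_iterSum (S := S) t
      rwa [hSc] at this
    · rw [Finsupp.le_def]
      intro i
      rw [haa, sum_single_apply, sum_single_apply]
      by_cases hi : i ∈ S <;> simp [hi]
  have hmem2 := hle hmem
  rw [span_gens_eq, MI_pow, monomial_mem_MI] at hmem2
  obtain ⟨s, hsG, hsle⟩ := hmem2
  have htot : ∑ i, s i = r * d := iterSum_Gset_total hsG
  have hbound : ∑ i, s i ≤ ∑ i, a i := Finset.sum_le_sum fun i _ => (Finsupp.le_def.mp hsle) i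
  have hasum : ∑ i, a i = n * t := by
    rw [haa]
    have : ∀ i : Fin n, (∑ j ∈ Finset.univ, Finsupp.single j t : Fin n →₀ ℕ) i = t := by
      intro i
      rw [sum_single_apply, if_pos (Finset.mem_univ i)]
    rw [Finset.sum_congr rfl fun i _ => this i, Finset.sum_const, smul_eq_mul,
      Finset.card_univ, Fintype.card_fin]
  omega

end Main

end UniformResurgenceAux

open UniformResurgenceAux in
/-- The resurgence of the uniform C-matroidal ideal of `U_{c,n}` equals `c(n-c+1)/n`. -/
theorem uniform_matroidal_resurgence
    (k : Type*) [Field k] (n c : ℕ) (hc : 1 ≤ c) (hcn : c ≤ n) :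
    sSup {x : ℝ | ∃ m r : ℕ, 1 ≤ m ∧ 1 ≤ r ∧
        ¬ ((⨅ S ∈ {S : Finset (Fin n) | S.card = c},
              (Ideal.span ((fun i => (X i : MvPolynomial (Fin n) k)) '' (S : Set (Fin n)))) ^ m) ≤
            (Ideal.span {f : MvPolynomial (Fin n) k |
              ∃ T : Finset (Fin n), T.card = n - c + 1 ∧ f = ∏ i ∈ T, X i}) ^ r) ∧
        x = (m : ℝ) / r} =
      (c : ℝ) * ((n : ℝ) - c + 1) / n := by
  have hn : 1 ≤ n := le_trans hc hcn
  set d := n - c + 1 with hdd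
  have hd1 : 1 ≤ d := by omega
  have hdcast : ((d : ℕ) : ℝ) = (n : ℝ) - c + 1 := by
    rw [hdd]
    push_cast [hcn]
    ring
  have hd0 : (0 : ℝ) < d := by exact_mod_cast hd1
  have hn0 : (0 : ℝ) < n := by exact_mod_cast hn
  -- the witness inequality
  have hkey : ∀ t : ℕ, n * t < (n * t / d + 1) * d := by
    intro t
    have h0 : 0 < d := hd1
    have h1 : d * (n * t / d) + n * t % d = n * t := Nat.div_add_mod _ _
    have h2 : n * t % d < d := Nat.mod_lt _ h0
    calc n * t = d * (n * t / d) + n * t % d := h1.symm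
      _ < d * (n * t / d) + d := by omega
      _ = (n * t / d + 1) * d := by ring
  have hwit : ∀ t : ℕ, 1 ≤ t →
      ((c * t : ℕ) : ℝ) / ((n * t / d + 1 : ℕ) : ℝ) ∈ {x : ℝ | ∃ m r : ℕ, 1 ≤ m ∧ 1 ≤ r ∧
        ¬ ((⨅ S ∈ {S : Finset (Fin n) | S.card = c},
              (Ideal.span ((fun i => (X i : MvPolynomial (Fin n) k)) '' (S : Set (Fin n)))) ^ m) ≤
            (Ideal.span {f : MvPolynomial (Fin n) k |
              ∃ T : Finset (Fin n), T.card = n - c + 1 ∧ f = ∏ i ∈ T, X i}) ^ r) ∧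
        x = (m : ℝ) / r} := by
    intro t ht
    refine ⟨c * t, n * t / d + 1, Nat.one_le_iff_ne_zero.mpr (by positivity),
      Nat.le_add_left 1 _, ?_, rfl⟩
    exact noncontainment k hc hcn t _ (hkey t)
  apply csSup_eq_of_forall_le_of_forall_lt_exists_gt
  · exact ⟨_, hwit 1 le_rfl⟩
  · -- upper bound
    rintro x ⟨m, r, hm, hr, hnc, rfl⟩
    have hnm : n * m ≤ r * c * d := by
      by_contra hh
      push_neg at hh
      exact hnc (containment k hc hcn m r hh)
    have hr0 : (0 : ℝ) < r := by exact_mod_cast hr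
    rw [div_le_div_iff₀ hr0 hn0]
    have hcast : (n : ℝ) * m ≤ (r : ℝ) * c * d := by exact_mod_cast hnm
    rw [hdcast] at hcast
    clear hnc
    nlinarith [hcast]
  · -- values approach the claimed supremum
    intro w hw
    have h0 : Filter.Tendsto (fun t : ℕ => ((d : ℕ) : ℝ) / t) Filter.atTop (nhds 0) :=
      tendsto_const_div_atTop_nhds_zero_nat ((d : ℕ) : ℝ)
    have h1 : Filter.Tendsto (fun t : ℕ => (n : ℝ) + (d : ℝ) / t) Filter.atTop (nhds (n : ℝ)) := by
      have := Filter.Tendsto.add (tendsto_const_nhds (x := (n : ℝ)) (f := Filter.atTop)) h0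
      simpa using this
    have h2 : Filter.Tendsto (fun t : ℕ => (c : ℝ) * d / ((n : ℝ) + (d : ℝ) / t)) Filter.atTop
        (nhds ((c : ℝ) * d / n)) :=
      Filter.Tendsto.div tendsto_const_nhds h1 (ne_of_gt hn0)
    have hlt : w < (c : ℝ) * d / n := by rw [hdcast]; exact hw
    have hev := (h2.eventually_const_lt hlt).and (Filter.eventually_ge_atTop 1)
    obtain ⟨t, hwt, ht1⟩ := hev.exists
    have ht0 : (0 : ℝ) < t := by exact_mod_cast ht1
    set r : ℕ := n * t / d + 1 with hrr
    have hr0 : (0 : ℝ) < r := by positivity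
    have hrle : (r : ℝ) ≤ ((n : ℝ) * t + d) / d := by
      have hq : ((n * t / d : ℕ) : ℝ) ≤ ((n * t : ℕ) : ℝ) / d := Nat.cast_div_le
      have he : ((n : ℝ) * t + (d : ℝ)) / (d : ℝ) = ((n : ℝ) * t) / (d : ℝ) + 1 := by
        rw [add_div, div_self (ne_of_gt hd0)]
      rw [hrr, he]
      push_cast
      push_cast at hq
      linarith
    refine ⟨((c * t : ℕ) : ℝ) / ((r : ℕ) : ℝ), hwit t ht1, ?_⟩
    have step1 : (c : ℝ) * d / ((n : ℝ) + (d : ℝ) / t) = (c : ℝ) * t * d / ((n : ℝ) * t + d) := by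
      rw [div_eq_div_iff (by positivity) (by positivity)]
      field_simp
    have step2 : (c : ℝ) * t * d / ((n : ℝ) * t + d) = ((c : ℝ) * t) / (((n : ℝ) * t + d) / d) := by
      rw [div_div_eq_mul_div]
    have step3 : ((c : ℝ) * t) / (((n : ℝ) * t + d) / d) ≤ ((c : ℝ) * t) / r :=
      div_le_div_of_nonneg_left (by positivity) hr0 hrle
    calc w < (c : ℝ) * d / ((n : ℝ) + (d : ℝ) / t) := hwt
      _ = ((c : ℝ) * t) / (((n : ℝ) * t + d) / d) := by rw [step1, step2]
      _ ≤ ((c : ℝ) * t) / r := step3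
      _ = ((c * t : ℕ) : ℝ) / ((r : ℕ) : ℝ) := by push_cast; ring
end

section
/- Let Δ be the simplicial complex on {1,2,3,4} with facets {1,2},{1,3},{1,4},{2,3}, and let I = (x_1x_3, x_1x_2x_4, x_2x_3x_4) ⊆ k[x_1,x_2,x_3,x_4] be its cover ideal. Then the monomial x_1^4 x_2^4 x_3^4 x_4^4 lies in the symbolic power I^(8) but not in the ordinary power I^7; in particular I^(8) ⊄ I^7 and hence the resurgence ρ(I) ≥ 8/7 > 1 = ht(I) − 1. -/
open MvPolynomial

/-- For the cover ideal `I = (x_1x_3, x_1x_2x_4, x_2x_3x_4)` of the non-peaked complex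
with facets `{1,2},{1,3},{1,4},{2,3}` (variables indexed `0,...,3`), the monomial
`(x_1x_2x_3x_4)^4` lies in `I^(8)` but not in `I^7`; hence `I^(8) ⊄ I^7`, the ratio
`8/7` occurs among resurgence ratios, and `8/7 > 1 = ht(I) - 1`. -/
theorem non_peaked_example_resurgence
    (I : Ideal (MvPolynomial (Fin 4) ℚ))
    (hI : I = Ideal.span {X 0 * X 2, X 0 * X 1 * X 3, X 1 * X 2 * X 3})
    (symb : ℕ → Ideal (MvPolynomial (Fin 4) ℚ))
    (hsymb : ∀ m, symb m =
      (Ideal.span {X 0, X 1}) ^ m ⊓ (Ideal.span {X 0, X 2}) ^ m ⊓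
      (Ideal.span {X 0, X 3}) ^ m ⊓ (Ideal.span {X 1, X 2}) ^ m) :
    (X 0 * X 1 * X 2 * X 3 : MvPolynomial (Fin 4) ℚ) ^ 4 ∈ symb 8 ∧
    (X 0 * X 1 * X 2 * X 3 : MvPolynomial (Fin 4) ℚ) ^ 4 ∉ I ^ 7 ∧
    ¬ symb 8 ≤ I ^ 7 ∧
    ((8 : ℝ) / 7 ∈
      {x : ℝ | ∃ m r : ℕ, 1 ≤ m ∧ 1 ≤ r ∧ ¬ symb m ≤ I ^ r ∧ x = (m : ℝ) / r}) ∧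
    (1 : ℝ) < 8 / 7 := by
  have key : ∀ i j : Fin 4, ∀ r : MvPolynomial (Fin 4) ℚ,
      r * ((X i) ^ 4 * (X j) ^ 4) ∈ (Ideal.span {X i, X j} : Ideal (MvPolynomial (Fin 4) ℚ)) ^ 8 := by
    intro i j r
    apply Ideal.mul_mem_left
    have h8 : (8 : ℕ) = 4 + 4 := rfl
    rw [h8, pow_add]
    exact Ideal.mul_mem_mul
      (Ideal.pow_mem_pow (Ideal.subset_span (by simp)) 4)
      (Ideal.pow_mem_pow (Ideal.subset_span (by simp)) 4)
  have hmem : (X 0 * X 1 * X 2 * X 3 : MvPolynomial (Fin 4) ℚ) ^ 4 ∈ symb 8 := by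
    rw [hsymb]
    simp only [Submodule.mem_inf]
    refine ⟨⟨⟨?_, ?_⟩, ?_⟩, ?_⟩
    · have := key 0 1 ((X 2 * X 3) ^ 4); convert this using 1; ring
    · have := key 0 2 ((X 1 * X 3) ^ 4); convert this using 1; ring
    · have := key 0 3 ((X 1 * X 2) ^ 4); convert this using 1; ring
    · have := key 1 2 ((X 0 * X 3) ^ 4); convert this using 1; ring
  set φ : MvPolynomial (Fin 4) ℚ →+* Polynomial ℚ :=
    (eval₂Hom (algebraMap ℚ (Polynomial ℚ))
      (fun i => if i = 3 then 1 else Polynomial.X)) with hφ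
  have hnot : (X 0 * X 1 * X 2 * X 3 : MvPolynomial (Fin 4) ℚ) ^ 4 ∉ I ^ 7 := by
    intro h
    rw [hI] at h
    have h2 := Ideal.mem_map_of_mem φ h
    rw [Ideal.map_pow, Ideal.map_span] at h2
    have hle : Ideal.span (φ '' {X 0 * X 2, X 0 * X 1 * X 3, X 1 * X 2 * X 3}) ≤
        Ideal.span {Polynomial.X ^ 2} := by
      rw [Ideal.span_le]
      rintro p ⟨q, hq, rfl⟩
      simp only [Set.mem_insert_iff, Set.mem_singleton_iff] at hq
      apply Ideal.subset_span
      rcases hq with rfl | rfl | rfl <;>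
        · simp only [hφ, map_mul, eval₂Hom_X', Set.mem_singleton_iff,
            show ((0 : Fin 4) = 3) = False from by decide,
            show ((1 : Fin 4) = 3) = False from by decide,
            show ((2 : Fin 4) = 3) = False from by decide,
            show ((3 : Fin 4) = 3) = True from by decide, if_false, if_true]
          ring
    have h3 : φ ((X 0 * X 1 * X 2 * X 3 : MvPolynomial (Fin 4) ℚ) ^ 4) ∈
        Ideal.span {Polynomial.X ^ 2} ^ 7 :=
      (Ideal.pow_right_mono hle 7) h2
    have heq : φ ((X 0 * X 1 * X 2 * X 3 : MvPolynomial (Fin 4) ℚ) ^ 4) =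
        Polynomial.X ^ 12 := by
      simp only [hφ, map_pow, map_mul, eval₂Hom_X',
        show ((0 : Fin 4) = 3) = False from by decide,
        show ((1 : Fin 4) = 3) = False from by decide,
        show ((2 : Fin 4) = 3) = False from by decide,
        show ((3 : Fin 4) = 3) = True from by decide, if_false, if_true]
      ring
    rw [heq, Ideal.span_singleton_pow, ← pow_mul, Ideal.mem_span_singleton] at h3
    have h4 := Polynomial.X_pow_dvd_iff.mp h3 12 (by norm_num)
    simp [Polynomial.coeff_X_pow] at h4
  have hnle : ¬ symb 8 ≤ I ^ 7 := fun hle => hnot (hle hmem)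
  exact ⟨hmem, hnot, hnle, ⟨8, 7, by norm_num, by norm_num, hnle, by norm_num⟩, by norm_num⟩
end

section
/- Let I be the uniform C-matroidal ideal of U_{c,n} (generated by all squarefree monomials of degree n−c+1 in k[x_1,...,x_n]). Then for 1 ≤ m ≤ c, the minimal degree of a monomial generator of the symbolic power I^(m) = ⋂_S (x_i : i ∈ S)^m is n − c + m, and for m > c the minimal degree of an element of I^(m) is ⌈m/c⌉·(n−c) + m. -/
open MvPolynomial

-- L1
private lemma aux_sumS_ge {k : Type*} [CommRing k] {n : ℕ} (S : Finset (Fin n)) :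
    ∀ (m : ℕ) (f : MvPolynomial (Fin n) k), f ∈ (Ideal.span ((fun i => (X i : MvPolynomial (Fin n) k)) '' (S : Set (Fin n)))) ^ m →
    ∀ μ ∈ f.support, m ≤ ∑ i ∈ S, μ i := by
  intro m
  induction m with
  | zero => intro f _ μ _; exact Nat.zero_le _
  | succ m ih =>
    intro f hf
    rw [pow_succ] at hf
    refine Submodule.mul_induction_on hf ?_ ?_
    · intro x hx y hy μ hμ
      have hμ' := MvPolynomial.support_mul x y hμ
      rw [Finset.mem_add] at hμ'
      obtain ⟨μ₁, h1, μ₂, h2, rfl⟩ := hμ'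
      have hx1 := ih x hx μ₁ h1
      have hy1 : 1 ≤ ∑ i ∈ S, μ₂ i := by
        rw [show (fun i => (X i : MvPolynomial (Fin n) k)) '' (S : Set (Fin n)) = MvPolynomial.X '' (S : Set (Fin n)) from rfl] at hy
        obtain ⟨i, hiS, hi⟩ := mem_ideal_span_X_image.mp hy μ₂ h2
        calc 1 ≤ μ₂ i := Nat.one_le_iff_ne_zero.mpr hi
        _ ≤ ∑ i ∈ S, μ₂ i := Finset.single_le_sum (fun _ _ => Nat.zero_le _) hiS
      have : ∑ i ∈ S, (μ₁ + μ₂) i = (∑ i ∈ S, μ₁ i) + ∑ i ∈ S, μ₂ i := by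
        simp [Finsupp.add_apply, Finset.sum_add_distrib]
      omega
    · intro x y hx hy μ hμ
      have := MvPolynomial.support_add hμ
      rw [Finset.mem_union] at this
      rcases this with h | h
      · exact hx μ h
      · exact hy μ h

-- L2
private lemma aux_monomial_mem {k : Type*} [CommRing k] {n : ℕ} (S : Finset (Fin n)) :
    ∀ (m : ℕ) (a : Fin n →₀ ℕ), m ≤ ∑ i ∈ S, a i →
    (monomial a (1:k)) ∈ (Ideal.span ((fun i => (X i : MvPolynomial (Fin n) k)) '' (S : Set (Fin n)))) ^ m := by
  intro m
  induction m with
  | zero => intro a _; simp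
  | succ m ih =>
    intro a ha
    have hpos : 0 < ∑ i ∈ S, a i := lt_of_lt_of_le (Nat.succ_pos m) ha
    obtain ⟨i, hiS, hi⟩ : ∃ i ∈ S, a i ≠ 0 := by
      by_contra h
      push_neg at h
      rw [Finset.sum_eq_zero h] at hpos
      exact absurd hpos (lt_irrefl 0)
    have hsingle : Finsupp.single i 1 + (a - Finsupp.single i 1) = a := by
      ext j
      rw [Finsupp.add_apply, Finsupp.tsub_apply, Finsupp.single_apply]
      rcases eq_or_ne i j with rfl | hj
      · rw [if_pos rfl]; omega
      · rw [if_neg hj]; omega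
    have hkey : (monomial a (1:k)) = X i * monomial (a - Finsupp.single i 1) 1 := by
      rw [X, monomial_mul, one_mul, hsingle]
    rw [hkey, pow_succ']
    refine Ideal.mul_mem_mul (Ideal.subset_span ⟨i, hiS, rfl⟩) (ih _ ?_)
    have h1 : ∑ j ∈ S, (a - Finsupp.single i 1 : Fin n →₀ ℕ) j
        = (a i - 1) + ∑ j ∈ S.erase i, a j := by
      rw [← Finset.add_sum_erase _ _ hiS]
      congr 1
      · rw [Finsupp.tsub_apply, Finsupp.single_apply, if_pos rfl]
      · refine Finset.sum_congr rfl fun j hj => ?_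
        have hji : i ≠ j := fun h => (Finset.mem_erase.mp hj).1 h.symm
        rw [Finsupp.tsub_apply, Finsupp.single_apply, if_neg hji]
        omega
    have h2 : ∑ j ∈ S, a j = a i + ∑ j ∈ S.erase i, a j := (Finset.add_sum_erase _ _ hiS).symm
    omega

-- L3 : combinatorial lower bound
private lemma aux_combinatorial {n c m q : ℕ} (hc : 1 ≤ c) (hcn : c ≤ n) (hm : 1 ≤ m)
    (hq1 : m ≤ c * q) (hq2 : c * q < m + c)
    (a : Fin n →₀ ℕ) (hA : ∀ S : Finset (Fin n), S.card = c → m ≤ ∑ i ∈ S, a i) :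
    q * (n - c) + m ≤ ∑ i : Fin n, a i := by
  -- pick a minimizing c-subset
  have hne : (Finset.univ.powersetCard c : Finset (Finset (Fin n))).Nonempty := by
    rw [Finset.powersetCard_nonempty]
    simpa using hcn
  obtain ⟨S₀, hS₀mem, hS₀min⟩ := Finset.exists_min_image _ (fun S => ∑ i ∈ S, a i) hne
  rw [Finset.mem_powersetCard] at hS₀mem
  obtain ⟨-, hS₀card⟩ := hS₀mem
  -- each element outside S₀ has a i ≥ a j for all j ∈ S₀
  have hout : ∀ i ∉ S₀, ∀ j ∈ S₀, a j ≤ a i := by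
    intro i hi j hj
    have hmem : insert i (S₀.erase j) ∈ Finset.univ.powersetCard c := by
      rw [Finset.mem_powersetCard]
      refine ⟨Finset.subset_univ _, ?_⟩
      rw [Finset.card_insert_of_notMem (fun h => hi (Finset.erase_subset _ _ h)),
        Finset.card_erase_of_mem hj, hS₀card]
      omega
    have := hS₀min _ hmem
    rw [Finset.sum_insert (fun h => hi (Finset.erase_subset _ _ h))] at this
    have h2 : ∑ x ∈ S₀, a x = a j + ∑ x ∈ S₀.erase j, a x := (Finset.add_sum_erase _ _ hj).symm
    omega
  -- each element outside S₀ has a i ≥ q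
  have houtq : ∀ i ∉ S₀, q ≤ a i := by
    intro i hi
    have h1 : m ≤ c * a i := by
      calc m ≤ ∑ j ∈ S₀, a j := hA S₀ hS₀card
      _ ≤ ∑ _j ∈ S₀, a i := Finset.sum_le_sum (fun j hj => hout i hi j hj)
      _ = c * a i := by rw [Finset.sum_const, hS₀card, smul_eq_mul]
    by_contra h
    push_neg at h
    have : c * (a i + 1) ≤ c * q := Nat.mul_le_mul_left c (by omega)
    have h3 : c * (a i + 1) = c * a i + c := by ring
    omega
  have hsplit : (∑ i ∈ Finset.univ \ S₀, a i) + ∑ i ∈ S₀, a i = ∑ i : Fin n, a i :=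
    Finset.sum_sdiff (Finset.subset_univ S₀)
  have hcard : (Finset.univ \ S₀).card = n - c := by
    rw [Finset.card_sdiff_of_subset (Finset.subset_univ S₀), hS₀card, Finset.card_univ, Fintype.card_fin]
  have h4 : (n - c) * q ≤ ∑ i ∈ Finset.univ \ S₀, a i := by
    calc (n - c) * q = ∑ _i ∈ Finset.univ \ S₀, q := by rw [Finset.sum_const, hcard, smul_eq_mul]
    _ ≤ _ := Finset.sum_le_sum (fun i hi => houtq i (Finset.mem_sdiff.mp hi).2)
  have h5 := hA S₀ hS₀card
  have : q * (n - c) = (n - c) * q := mul_comm _ _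
  omega

private lemma aux_main (k : Type*) [Field k] (n c : ℕ) (hc : 1 ≤ c) (hcn : c ≤ n)
    (m : ℕ) (hm : 1 ≤ m) :
    IsLeast {d : ℕ | ∃ f ∈ ⨅ S ∈ {S : Finset (Fin n) | S.card = c},
        (Ideal.span ((fun i => (X i : MvPolynomial (Fin n) k)) '' (S : Set (Fin n)))) ^ m,
      f ≠ 0 ∧ f.totalDegree = d} (((m + c - 1) / c) * (n - c) + m) := by
  suffices key : ∀ q : ℕ, m ≤ c * q → c * q < m + c → IsLeast {d : ℕ | ∃ f ∈ ⨅ S ∈ {S : Finset (Fin n) | S.card = c},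
        (Ideal.span ((fun i => (X i : MvPolynomial (Fin n) k)) '' (S : Set (Fin n)))) ^ m,
      f ≠ 0 ∧ f.totalDegree = d} (q * (n - c) + m) by
    have hd := Nat.div_add_mod (m + c - 1) c
    have hmod := Nat.mod_lt (m + c - 1) (show 0 < c by omega)
    exact key _ (by omega) (by omega)
  intro q hq1 hq2
  have hq0 : 1 ≤ q := by
    rcases Nat.eq_zero_or_pos q with h | h
    · rw [h, mul_zero] at hq1; omega
    · exact h
  obtain ⟨q', rfl⟩ : ∃ q', q = q' + 1 := ⟨q - 1, by omega⟩
  set r := c * (q' + 1) - m with hrdef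
  have hmr : m + r = c * (q' + 1) := by omega
  have hrc : r < c := by omega
  have hrn : r ≤ n := by omega
  constructor
  · -- membership : the monomial with r exponents q' and n - r exponents q'+1
    set a : Fin n →₀ ℕ :=
      Finsupp.equivFunOnFinite.symm (fun i => if i.val < r then q' else q' + 1) with hadef
    have ha : ∀ i : Fin n, a i = if i.val < r then q' else q' + 1 := fun i => rfl
    have hSsum : ∀ S : Finset (Fin n), S.card = c → m ≤ ∑ i ∈ S, a i := by
      intro S hS
      classical
      set t := (S.filter (fun i => i.val < r)).card with htdef
      have hsplit := Finset.sum_filter_add_sum_filter_not S (fun i => i.val < r) a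
      have h1 : ∑ i ∈ S.filter (fun i => i.val < r), a i = t * q' := by
        rw [Finset.sum_congr rfl (fun i hi => by
          rw [ha, if_pos (Finset.mem_filter.mp hi).2]), Finset.sum_const, smul_eq_mul]
      have h2 : ∑ i ∈ S.filter (fun i => ¬ i.val < r), a i
          = (S.filter (fun i => ¬ i.val < r)).card * (q' + 1) := by
        rw [Finset.sum_congr rfl (fun i hi => by
          rw [ha, if_neg (Finset.mem_filter.mp hi).2]), Finset.sum_const, smul_eq_mul]
      have htr : t ≤ r := by
        have : (S.filter (fun i => i.val < r)).card ≤ (Finset.range r).card :=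
          Finset.card_le_card_of_injOn (fun i => i.val)
            (fun i hi => Finset.mem_range.mpr (Finset.mem_filter.mp hi).2)
            (fun i _ j _ h => Fin.val_injective h)
        rwa [Finset.card_range] at this
      set u := (S.filter (fun i => ¬ i.val < r)).card with hudef
      have hctu : t + u = c := by
        have := Finset.card_filter_add_card_filter_not
          (s := S) (p := fun i => i.val < r)
        rw [hS] at this
        exact this
      have hexp1 : c * (q' + 1) = t * q' + u * q' + t + u := by rw [← hctu]; ring
      have hexp2 : u * (q' + 1) = u * q' + u := by ring
      omega
    refine ⟨monomial a (1 : k), ?_, ?_, ?_⟩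
    · simp only [Ideal.mem_iInf, Set.mem_setOf_eq]
      intro S hS
      exact aux_monomial_mem S m a (hSsum S hS)
    · simp
    · rw [totalDegree_monomial _ (one_ne_zero (α := k)),
        Finsupp.sum_fintype _ _ (fun _ => rfl)]
      have hsum1 : ∑ i : Fin n, a i
          = ∑ i ∈ Finset.range n, (if i < r then q' else q' + 1) := by
        rw [Finset.sum_congr rfl fun (i : Fin n) _ => ha i]
        exact Fin.sum_univ_eq_sum_range (fun j => if j < r then q' else q' + 1) n
      rw [hsum1]
      rw [Finset.range_eq_Ico, ← Finset.sum_Ico_consecutive _ (Nat.zero_le r) hrn]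
      have h1 : ∑ i ∈ Finset.Ico 0 r, (if i < r then q' else q' + 1) = r * q' := by
        rw [Finset.sum_congr rfl (fun i hi => if_pos (Finset.mem_Ico.mp hi).2),
          Finset.sum_const, smul_eq_mul, Nat.card_Ico, Nat.sub_zero]
      have h2 : ∑ i ∈ Finset.Ico r n, (if i < r then q' else q' + 1) = (n - r) * (q' + 1) := by
        rw [Finset.sum_congr rfl (fun i hi => if_neg (by
          have := (Finset.mem_Ico.mp hi).1; omega)),
          Finset.sum_const, smul_eq_mul, Nat.card_Ico]
      rw [h1, h2]
      have hmrz : (m : ℤ) + r = c * (q' + 1) := by exact_mod_cast hmr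
      zify [hrn, hcn]
      linear_combination -hmrz
  · -- lower bound
    rintro d ⟨f, hf, hf0, rfl⟩
    simp only [Ideal.mem_iInf, Set.mem_setOf_eq] at hf
    obtain ⟨μ, hμ⟩ := (MvPolynomial.support_nonempty.mpr hf0)
    have hμdeg : (μ.sum fun _ e => e) ≤ f.totalDegree := le_totalDegree hμ
    rw [Finsupp.sum_fintype _ _ (fun _ => rfl)] at hμdeg
    have hA : ∀ S : Finset (Fin n), S.card = c → m ≤ ∑ i ∈ S, μ i := by
      intro S hS
      exact aux_sumS_ge S m f (hf S hS) μ hμ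
    have := aux_combinatorial hc hcn hm hq1 hq2 μ hA
    have hcomm : (q' + 1) * (n - c) = (n - c) * (q' + 1) := mul_comm _ _
    omega

/-- Initial degrees of symbolic powers of the uniform C-matroidal ideal of `U_{c,n}`:
for `1 ≤ m ≤ c` the minimal degree of a nonzero element of `I^(m)` is `n - c + m`,
and for `m > c` it is `⌈m/c⌉(n-c) + m` (here `⌈m/c⌉ = (m + c - 1)/c` in `ℕ`). -/
theorem uniform_matroidal_initial_degree
    (k : Type*) [Field k] (n c : ℕ) (hc : 1 ≤ c) (hcn : c ≤ n) :
    (∀ m : ℕ, 1 ≤ m → m ≤ c →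
      IsLeast {d : ℕ | ∃ f ∈ ⨅ S ∈ {S : Finset (Fin n) | S.card = c},
          (Ideal.span ((fun i => (X i : MvPolynomial (Fin n) k)) '' (S : Set (Fin n)))) ^ m,
        f ≠ 0 ∧ f.totalDegree = d} (n - c + m)) ∧
    (∀ m : ℕ, c < m →
      IsLeast {d : ℕ | ∃ f ∈ ⨅ S ∈ {S : Finset (Fin n) | S.card = c},
          (Ideal.span ((fun i => (X i : MvPolynomial (Fin n) k)) '' (S : Set (Fin n)))) ^ m,
        f ≠ 0 ∧ f.totalDegree = d} (((m + c - 1) / c) * (n - c) + m)) := by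
  constructor
  · intro m hm1 hm2
    have h := aux_main k n c hc hcn m hm1
    have hdiv : (m + c - 1) / c = 1 := Nat.div_eq_of_lt_le (by omega) (by omega)
    rw [hdiv, one_mul] at h
    exact h
  · intro m hmc
    exact aux_main k n c hc hcn m (by omega)
end

section
/- For positive integers m, r, c, n with 2 ≤ c ≤ n: if r > (⌈m/c⌉(n−c) + m)/(n−c+1), then m/r < c(n−c+1)/n. Hence the containment criterion for the uniform matroidal ideal implies that every ratio m/r with I^(m) ⊄ I^r is strictly less than c(n−c+1)/n. -/
/-- Arithmetic half of the resurgence computation: for positive integers `m, r` and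
`2 ≤ c ≤ n`, if `r > (⌈m/c⌉(n-c) + m)/(n-c+1)` then `m/r < c(n-c+1)/n`. -/
theorem resurgence_ratio_bound
    (m r c n : ℕ) (hm : 1 ≤ m) (hr : 1 ≤ r) (hc : 2 ≤ c) (hcn : c ≤ n)
    (h : ((⌈(m : ℚ) / c⌉ * ((n : ℚ) - c) + m) / ((n : ℚ) - c + 1)) < (r : ℚ)) :
    (m : ℚ) / r < (c : ℚ) * ((n : ℚ) - c + 1) / n := by
  have hc0 : (0:ℚ) < c := by exact_mod_cast lt_of_lt_of_le (by norm_num) hc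
  have hn0 : (0:ℚ) < n := lt_of_lt_of_le hc0 (by exact_mod_cast hcn)
  have hr0 : (0:ℚ) < r := by exact_mod_cast hr
  have hm0 : (0:ℚ) < m := by exact_mod_cast hm
  have hnc : (0:ℚ) ≤ (n:ℚ) - c := by
    have : (c:ℚ) ≤ n := by exact_mod_cast hcn
    linarith
  have h1 : (0:ℚ) < (n:ℚ) - c + 1 := by linarith
  have hceil : (m:ℚ)/c ≤ (⌈(m:ℚ)/c⌉ : ℚ) := Int.le_ceil _
  have h2 : (⌈(m:ℚ)/c⌉:ℚ) * ((n:ℚ)-c) + m < r * ((n:ℚ)-c+1) := by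
    rw [div_lt_iff₀ h1] at h; linarith
  have hmc : (m:ℚ)/c * c = m := div_mul_cancel₀ _ (ne_of_gt hc0)
  have h3 : (m:ℚ)*n/c ≤ (⌈(m:ℚ)/c⌉:ℚ) * ((n:ℚ)-c) + m := by
    rw [div_le_iff₀ hc0]
    have := mul_le_mul_of_nonneg_right hceil hnc
    nlinarith [this, hmc]
  have h4 : (m:ℚ)*n < (r * ((n:ℚ)-c+1)) * c :=
    (div_lt_iff₀ hc0).mp (lt_of_le_of_lt h3 h2)
  rw [div_lt_div_iff₀ hr0 hn0]
  nlinarith [h4]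
end
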